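/- For every complex number q with |q| < 1, the following identity holds: (1+q^3) · Σ_{n≥0} (−q^2; q^2)_n q^{2n+1} / (q; q^2)_n = q^2(q^4; q^4)_∞/(q; q)_∞ − q^2 + q. -/

import Mathlib

/-- The finite q-Pochhammer symbol `(a; q)_n = ∏_{j=0}^{n-1} (1 - a q^j)`. -/
noncomputable def qPoch (a q : ℂ) (n : ℕ) : ℂ := ∏ j ∈ Finset.range n, (1 - a * q ^ j)

/-- The infinite q-Pochhammer symbol `(a; q)_∞ = ∏_{j=0}^{∞} (1 - a q^j)`. -/
noncomputable def qPochInf (a q : ℂ) : ℂ := ∏' j : ℕ, (1 - a * q ^ j)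

/-!
Writing `a n = (-q²; q²)_n / (q; q²)_n`, the ratio `a (n+1) / a n = (1 + q^{2n+2}) / (1 - q^{2n+1})`
makes the summands telescope: `(1 + q³) a n q^{2n+1} = b n - b (n+1)` with
`b n = (q^{2n+1} - q²) a n`. Hence `(1 + q³)` times the series equals
`b 0 - lim b = q - q² + q² (-q²; q²)_∞ / (q; q²)_∞`, and splitting `(q; q)_∞` and `(q⁴; q⁴)_∞`
into even and odd factors turns the last ratio into `(q⁴; q⁴)_∞ / (q; q)_∞`.
-/

open Filter Topology Finset

section QPochhammer

variable {a q : ℂ}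

lemma norm_sq_lt_one_of_norm_lt_one (hq : ‖q‖ < 1) : ‖q ^ 2‖ < 1 := by
  rw [norm_pow]
  exact pow_lt_one₀ (norm_nonneg q) hq two_ne_zero

lemma qPoch_zero (a q : ℂ) : qPoch a q 0 = 1 := prod_range_zero _

lemma qPoch_succ (a q : ℂ) (n : ℕ) : qPoch a q (n + 1) = qPoch a q n * (1 - a * q ^ n) :=
  prod_range_succ _ n

lemma one_sub_mul_pow_ne_zero (ha : ‖a‖ < 1) (hq : ‖q‖ ≤ 1) (j : ℕ) : 1 - a * q ^ j ≠ 0 := by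
  refine sub_ne_zero.2 fun h => ?_
  have : ‖a * q ^ j‖ < 1 := by
    rw [norm_mul, norm_pow]
    exact mul_lt_one_of_nonneg_of_lt_one_left (norm_nonneg a) ha (pow_le_one₀ (norm_nonneg q) hq)
  simp [← h] at this

lemma qPoch_ne_zero (ha : ‖a‖ < 1) (hq : ‖q‖ ≤ 1) (n : ℕ) : qPoch a q n ≠ 0 :=
  prod_ne_zero_iff.2 fun j _ => one_sub_mul_pow_ne_zero ha hq j

lemma summable_norm_mul_pow (a : ℂ) (hq : ‖q‖ < 1) : Summable fun j : ℕ => ‖a * q ^ j‖ := by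
  simpa [norm_mul, norm_pow] using (summable_geometric_of_lt_one (norm_nonneg q) hq).mul_left ‖a‖

lemma hasProd_qPochInf (a : ℂ) (hq : ‖q‖ < 1) :
    HasProd (fun j : ℕ => 1 - a * q ^ j) (qPochInf a q) := by
  have := multipliable_one_add_of_summable (f := fun j : ℕ => -(a * q ^ j))
    (by simpa using summable_norm_mul_pow a hq)
  simpa [qPochInf, ← sub_eq_add_neg] using this.hasProd

lemma qPochInf_ne_zero (ha : ‖a‖ < 1) (hq : ‖q‖ < 1) : qPochInf a q ≠ 0 := by
  have := tprod_one_add_ne_zero_of_summable (f := fun j : ℕ => -(a * q ^ j))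
    (by simpa [← sub_eq_add_neg] using one_sub_mul_pow_ne_zero ha hq.le)
    (by simpa using summable_norm_mul_pow a hq)
  simpa [qPochInf, ← sub_eq_add_neg] using this

lemma tendsto_qPoch (a : ℂ) (hq : ‖q‖ < 1) :
    Tendsto (qPoch a q) atTop (𝓝 (qPochInf a q)) :=
  (hasProd_qPochInf a hq).tendsto_prod_nat

lemma qPochInf_eq_mul_qPochInf_sq (a : ℂ) (hq : ‖q‖ < 1) :
    qPochInf a q = qPochInf a (q ^ 2) * qPochInf (a * q) (q ^ 2) := by
  have hq2 := norm_sq_lt_one_of_norm_lt_one hq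
  refine (hasProd_qPochInf a hq).unique (HasProd.even_mul_odd ?_ ?_)
  · simpa [← pow_mul] using hasProd_qPochInf a hq2
  · convert hasProd_qPochInf (a * q) hq2 using 2 with k
    ring

lemma qPochInf_neg_mul_qPochInf (a : ℂ) (hq : ‖q‖ < 1) :
    qPochInf (-a) q * qPochInf a q = qPochInf (a ^ 2) (q ^ 2) := by
  have hq2 := norm_sq_lt_one_of_norm_lt_one hq
  refine ((hasProd_qPochInf (-a) hq).mul (hasProd_qPochInf a hq)).unique ?_
  convert hasProd_qPochInf (a ^ 2) hq2 using 2 with j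
  ring

end QPochhammer

lemma hasSum_of_telescoping {E : Type*} [SeminormedAddCommGroup E] {f b : ℕ → E} {l : E}
    (hf : Summable fun n => ‖f n‖) (hfb : ∀ n, f n = b n - b (n + 1))
    (hb : Tendsto b atTop (𝓝 l)) : HasSum f (b 0 - l) := by
  rw [hasSum_iff_tendsto_nat_of_summable_norm hf]
  simp_rw [hfb, sum_range_sub']
  exact hb.const_sub _

lemma summable_norm_mul_pow_of_tendsto {𝕜 : Type*} [NormedDivisionRing 𝕜] {a : ℕ → 𝕜} {l r : 𝕜}
    (ha : Tendsto a atTop (𝓝 l)) (hr : ‖r‖ < 1) : Summable fun n => ‖a n * r ^ n‖ := by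
  obtain ⟨C, hC⟩ := ha.norm.bddAbove_range
  refine Summable.of_nonneg_of_le (fun n => norm_nonneg _) (fun n => ?_)
    ((summable_geometric_of_lt_one (norm_nonneg r) hr).mul_left C)
  rw [norm_mul, norm_pow]
  exact mul_le_mul_of_nonneg_right (hC (Set.mem_range_self n)) (by positivity)

lemma qPochInf_pow_four_div_qPochInf (q : ℂ) (hq : ‖q‖ < 1) :
    qPochInf (q ^ 4) (q ^ 4) / qPochInf q q = qPochInf (-q ^ 2) (q ^ 2) / qPochInf q (q ^ 2) := by
  have hq2 := norm_sq_lt_one_of_norm_lt_one hq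
  have hnum : qPochInf (q ^ 4) (q ^ 4) = qPochInf (-q ^ 2) (q ^ 2) * qPochInf (q ^ 2) (q ^ 2) := by
    rw [qPochInf_neg_mul_qPochInf _ hq2, ← pow_mul]
  have hden : qPochInf q q = qPochInf q (q ^ 2) * qPochInf (q ^ 2) (q ^ 2) := by
    rw [qPochInf_eq_mul_qPochInf_sq q hq, ← sq]
  rw [hnum, hden, mul_div_mul_right _ _ (qPochInf_ne_zero hq2 hq2)]

lemma one_add_pow_three_mul_summand_eq_sub {q : ℂ} {n : ℕ} (h : qPoch q (q ^ 2) (n + 1) ≠ 0) :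
    (1 + q ^ 3) * (qPoch (-q ^ 2) (q ^ 2) n * q ^ (2 * n + 1) / qPoch q (q ^ 2) n) =
      (q ^ (2 * n + 1) - q ^ 2) * (qPoch (-q ^ 2) (q ^ 2) n / qPoch q (q ^ 2) n) -
        (q ^ (2 * (n + 1) + 1) - q ^ 2) *
          (qPoch (-q ^ 2) (q ^ 2) (n + 1) / qPoch q (q ^ 2) (n + 1)) := by
  rw [qPoch_succ, qPoch_succ] at *
  obtain ⟨hQ, hfactor⟩ := mul_ne_zero_iff.1 h
  field_simp
  ring

theorem stmt_5 (q : ℂ) (hq : ‖q‖ < 1) :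
    (1 + q ^ 3) * ∑' n : ℕ, qPoch (-q ^ 2) (q ^ 2) n * q ^ (2 * n + 1) / qPoch q (q ^ 2) n =
      q ^ 2 * qPochInf (q ^ 4) (q ^ 4) / qPochInf q q - q ^ 2 + q := by
  have hq2 := norm_sq_lt_one_of_norm_lt_one hq
  set a : ℕ → ℂ := fun n => qPoch (-q ^ 2) (q ^ 2) n / qPoch q (q ^ 2) n
  set L := qPochInf (-q ^ 2) (q ^ 2) / qPochInf q (q ^ 2)
  have ha : Tendsto a atTop (𝓝 L) :=
    (tendsto_qPoch _ hq2).div (tendsto_qPoch _ hq2) (qPochInf_ne_zero hq hq2)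
  have hpow : Tendsto (fun n : ℕ => q ^ (2 * n + 1)) atTop (𝓝 0) :=
    (tendsto_pow_atTop_nhds_zero_of_norm_lt_one hq).comp
      (tendsto_atTop_mono (fun n => by simp only [id]; omega) tendsto_id)
  have hsummable : Summable fun n =>
      ‖(1 + q ^ 3) * (qPoch (-q ^ 2) (q ^ 2) n * q ^ (2 * n + 1) / qPoch q (q ^ 2) n)‖ := by
    refine ((summable_norm_mul_pow_of_tendsto ha hq2).mul_left ‖(1 + q ^ 3) * q‖).congr fun n => ?_
    rw [← norm_mul]
    congr 1
    simp only [a]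
    ring
  have hsum := hasSum_of_telescoping hsummable
    (fun n => one_add_pow_three_mul_summand_eq_sub (qPoch_ne_zero hq hq2.le (n + 1)))
    ((hpow.sub_const (q ^ 2)).mul ha)
  rw [← tsum_mul_left, hsum.tsum_eq, mul_div_assoc, qPochInf_pow_four_div_qPochInf q hq]
  simp only [qPoch_zero]
  ring
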